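/- Let α_1, β_1, α_2, β_2 > 0, let g(α_1,β_1,α_2,β_2) = ∫_0^1 f(x;α_1,β_1) I_x(α_2,β_2) dx and h(α_1,β_1,α_2,β_2) = B(α_1+α_2, β_1+β_2)/(B(α_1,β_1) B(α_2,β_2)). Then g(α_1, β_1+1, α_2, β_2) = g(α_1,β_1,α_2,β_2) − h(α_1,β_1,α_2,β_2)/β_1. -/

import Mathlib

open MeasureTheory Real Set

/-- The Beta function `B(a,b) = ∫₀¹ t^(a-1) (1-t)^(b-1) dt`. -/
noncomputable def betaFn (a b : ℝ) : ℝ :=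
  ∫ t in (0:ℝ)..1, t ^ (a - 1) * (1 - t) ^ (b - 1)

/-- The Beta(a,b) probability density on `[0,1]`. -/
noncomputable def betaPdf (a b : ℝ) (x : ℝ) : ℝ :=
  x ^ (a - 1) * (1 - x) ^ (b - 1) / betaFn a b

/-- The cumulative distribution function of Beta(a,b). -/
noncomputable def betaCdf (a b : ℝ) (x : ℝ) : ℝ :=
  (∫ t in (0:ℝ)..x, t ^ (a - 1) * (1 - t) ^ (b - 1)) / betaFn a b

/-- `g(α₁,β₁,α₂,β₂)`: the probability that an independent Beta(α₁,β₁) sample exceeds an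
independent Beta(α₂,β₂) sample. -/
noncomputable def probG (a₁ b₁ a₂ b₂ : ℝ) : ℝ :=
  ∫ x in (0:ℝ)..1, betaPdf a₁ b₁ x * betaCdf a₂ b₂ x

/-- `h(α₁,β₁,α₂,β₂) = B(α₁+α₂,β₁+β₂)/(B(α₁,β₁) B(α₂,β₂))`. -/
noncomputable def probH (a₁ b₁ a₂ b₂ : ℝ) : ℝ :=
  betaFn (a₁ + a₂) (b₁ + b₂) / (betaFn a₁ b₁ * betaFn a₂ b₂)


/-!
Write `M(a, b; F) = ∫₀¹ x^(a-1) (1-x)^(b-1) F(x) dx`, so that `B(a, b) = M(a, b; 1)` and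
`B(a₁, b₁) g(a₁, b₁, a₂, b₂) = M(a₁, b₁; I(a₂, b₂))`. Splitting the kernel along `1 = x + (1 - x)`
gives `M(a, b) = M(a, b + 1) + M(a + 1, b)`, and integrating `(x^a (1-x)^b)' F` by parts gives
`a M(a, b + 1) - b M(a + 1, b) = -∫₀¹ x^a (1-x)^b F'`, the boundary terms vanishing. Together,
`b M(a, b; F) = (a + b) M(a, b + 1; F) + ∫₀¹ x^a (1-x)^b F'`. For `F = 1` this is
`b B(a, b) = (a + b) B(a, b + 1)`; for `F = I(a₂, b₂)` the last integral is
`B(a₁ + a₂, b₁ + b₂) / B(a₂, b₂)`, and dividing the two identities gives the recurrence.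
-/

open intervalIntegral

section BetaKernel

variable {a b x : ℝ}

lemma intervalIntegrable_beta_kernel_zero_half (ha : 0 < a) (b : ℝ) :
    IntervalIntegrable (fun x : ℝ => x ^ (a - 1) * (1 - x) ^ (b - 1)) volume 0 (1 / 2) := by
  refine (intervalIntegrable_rpow' (by linarith)).mul_continuousOn ?_
  refine (continuousOn_const.sub continuousOn_id).rpow_const fun x hx => Or.inl ?_
  rw [uIcc_of_le (by norm_num)] at hx
  exact (sub_pos.mpr (show x < 1 by linarith [hx.2])).ne'

lemma intervalIntegrable_beta_kernel (ha : 0 < a) (hb : 0 < b) :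
    IntervalIntegrable (fun x : ℝ => x ^ (a - 1) * (1 - x) ^ (b - 1)) volume 0 1 := by
  have right :
      IntervalIntegrable (fun x : ℝ => x ^ (a - 1) * (1 - x) ^ (b - 1)) volume (1 / 2) 1 := by
    -- the kernel is invariant under `x ↦ 1 - x` together with `a ↔ b`
    have := (intervalIntegrable_beta_kernel_zero_half hb a).comp_sub_left 1
    norm_num [mul_comm] at this
    exact this.symm
  exact (intervalIntegrable_beta_kernel_zero_half ha b).trans right

lemma continuousOn_beta_kernel :
    ContinuousOn (fun x : ℝ => x ^ (a - 1) * (1 - x) ^ (b - 1)) (Ioo 0 1) :=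
  (continuousOn_id.rpow_const fun _ hx => Or.inl hx.1.ne').mul
    ((continuousOn_const.sub continuousOn_id).rpow_const fun _ hx => Or.inl (sub_pos.mpr hx.2).ne')

lemma beta_kernel_eq_add (hx : x ∈ Ioo 0 1) :
    x ^ (a - 1) * (1 - x) ^ (b - 1) = x ^ (a - 1) * (1 - x) ^ b + x ^ a * (1 - x) ^ (b - 1) := by
  have hx₀ : x ≠ 0 := hx.1.ne'
  have hx₁ : 1 - x ≠ 0 := (sub_pos.mpr hx.2).ne'
  rw [rpow_sub_one hx₀, rpow_sub_one hx₁]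
  field_simp
  ring

lemma hasDerivAt_rpow_mul_one_sub_rpow (hx : x ∈ Ioo 0 1) :
    HasDerivAt (fun x : ℝ => x ^ a * (1 - x) ^ b)
      (a * (x ^ (a - 1) * (1 - x) ^ b) - b * (x ^ a * (1 - x) ^ (b - 1))) x := by
  have h₁ := hasDerivAt_rpow_const (p := a) (Or.inl hx.1.ne')
  have h₂ : HasDerivAt (fun x : ℝ => (1 - x) ^ b) (-1 * b * (1 - x) ^ (b - 1)) x := by
    simpa using ((hasDerivAt_id x).const_sub 1).rpow_const (p := b) (Or.inl (sub_pos.mpr hx.2).ne')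
  exact (h₁.fun_mul h₂).congr_deriv (by ring)

lemma betaFn_pos (ha : 0 < a) (hb : 0 < b) : 0 < betaFn a b :=
  intervalIntegral_pos_of_pos_on (intervalIntegrable_beta_kernel ha hb)
    (fun _ hx => mul_pos (rpow_pos_of_pos hx.1 _) (rpow_pos_of_pos (sub_pos.mpr hx.2) _)) one_pos

end BetaKernel

noncomputable def betaMoment (a b : ℝ) (F : ℝ → ℝ) : ℝ :=
  ∫ x in (0 : ℝ)..1, x ^ (a - 1) * (1 - x) ^ (b - 1) * F x

lemma betaFn_eq_betaMoment_one (a b : ℝ) : betaFn a b = betaMoment a b fun _ => 1 := by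
  simp only [betaFn, betaMoment, mul_one]

lemma probG_eq_betaMoment_div (a₁ b₁ a₂ b₂ : ℝ) :
    probG a₁ b₁ a₂ b₂ = betaMoment a₁ b₁ (betaCdf a₂ b₂) / betaFn a₁ b₁ := by
  simp only [probG, betaPdf, betaMoment, div_mul_eq_mul_div, intervalIntegral.integral_div]

section BetaMoment

variable {a b : ℝ} {F f : ℝ → ℝ}

lemma betaMoment_eq_add (ha : 0 < a) (hb : 0 < b) (hF : ContinuousOn F (uIcc 0 1)) :
    betaMoment a b F = betaMoment a (b + 1) F + betaMoment (a + 1) b F := by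
  have h₁ := (intervalIntegrable_beta_kernel ha (by linarith : 0 < b + 1)).mul_continuousOn hF
  have h₂ := (intervalIntegrable_beta_kernel (by linarith : 0 < a + 1) hb).mul_continuousOn hF
  simp only [add_sub_cancel_right] at h₁ h₂
  simp only [betaMoment, add_sub_cancel_right, ← integral_add h₁ h₂]
  exact integral_congr_Ioo_of_le zero_le_one fun x hx => by rw [beta_kernel_eq_add hx]; ring

lemma mul_betaMoment_sub (ha : 0 < a) (hb : 0 < b) (hF : ContinuousOn F (uIcc 0 1))
    (hFf : ∀ x ∈ Ioo (0 : ℝ) 1, HasDerivAt F (f x) x) (hf : IntervalIntegrable f volume 0 1) :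
    a * betaMoment a (b + 1) F - b * betaMoment (a + 1) b F
      = -∫ x in (0 : ℝ)..1, x ^ a * (1 - x) ^ b * f x := by
  have h₁ := intervalIntegrable_beta_kernel ha (by linarith : 0 < b + 1)
  have h₂ := intervalIntegrable_beta_kernel (by linarith : 0 < a + 1) hb
  simp only [add_sub_cancel_right] at h₁ h₂
  have hu : Continuous fun x : ℝ => x ^ a * (1 - x) ^ b :=
    (continuous_id.rpow_const fun _ => Or.inr ha.le).mul
      ((continuous_const.sub continuous_id).rpow_const fun _ => Or.inr hb.le)
  have parts := integral_deriv_mul_eq_sub_of_hasDerivAt hu.continuousOn hF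
    (fun x hx => hasDerivAt_rpow_mul_one_sub_rpow (by simpa using hx))
    (fun x hx => hFf x (by simpa using hx)) ((h₁.const_mul a).sub (h₂.const_mul b)) hf
  simp only [zero_rpow ha.ne', zero_rpow hb.ne', sub_self, zero_mul, mul_zero] at parts
  rw [integral_add (((h₁.const_mul a).sub (h₂.const_mul b)).mul_continuousOn hF)
    (hf.continuousOn_mul hu.continuousOn)] at parts
  have hmoments : ∫ x in (0 : ℝ)..1,
      (a * (x ^ (a - 1) * (1 - x) ^ b) - b * (x ^ a * (1 - x) ^ (b - 1))) * F x
        = a * betaMoment a (b + 1) F - b * betaMoment (a + 1) b F := by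
    simp only [betaMoment, add_sub_cancel_right, ← intervalIntegral.integral_const_mul]
    rw [← integral_sub ((h₁.mul_continuousOn hF).const_mul a)
      ((h₂.mul_continuousOn hF).const_mul b)]
    congr 1 with x
    ring
  linarith

lemma mul_betaMoment_eq (ha : 0 < a) (hb : 0 < b) (hF : ContinuousOn F (uIcc 0 1))
    (hFf : ∀ x ∈ Ioo (0 : ℝ) 1, HasDerivAt F (f x) x) (hf : IntervalIntegrable f volume 0 1) :
    b * betaMoment a b F
      = (a + b) * betaMoment a (b + 1) F + ∫ x in (0 : ℝ)..1, x ^ a * (1 - x) ^ b * f x := by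
  linear_combination b * betaMoment_eq_add ha hb hF - mul_betaMoment_sub ha hb hF hFf hf

lemma mul_betaFn_eq (ha : 0 < a) (hb : 0 < b) :
    b * betaFn a b = (a + b) * betaFn a (b + 1) := by
  simpa [← betaFn_eq_betaMoment_one] using
    mul_betaMoment_eq (f := 0) ha hb continuousOn_const (fun x _ => hasDerivAt_const x 1)
      intervalIntegrable_const

end BetaMoment

section BetaCdf

variable {a b : ℝ}

lemma continuousOn_betaCdf (ha : 0 < a) (hb : 0 < b) : ContinuousOn (betaCdf a b) (uIcc 0 1) :=
  (continuousOn_primitive_interval' (intervalIntegrable_beta_kernel ha hb)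
    left_mem_uIcc).div_const _

lemma hasDerivAt_betaCdf (ha : 0 < a) (hb : 0 < b) {x : ℝ} (hx : x ∈ Ioo (0 : ℝ) 1) :
    HasDerivAt (betaCdf a b) (betaPdf a b x) x := by
  refine (integral_hasDerivAt_right ?_ ?_ ?_).div_const _
  · refine (intervalIntegrable_beta_kernel ha hb).mono_set ?_
    rw [uIcc_of_le hx.1.le, uIcc_of_le zero_le_one]
    exact Icc_subset_Icc_right hx.2.le
  · exact continuousOn_beta_kernel.stronglyMeasurableAtFilter isOpen_Ioo x hx
  · exact continuousOn_beta_kernel.continuousAt (isOpen_Ioo.mem_nhds hx)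

lemma intervalIntegrable_betaPdf (ha : 0 < a) (hb : 0 < b) :
    IntervalIntegrable (betaPdf a b) volume 0 1 :=
  (intervalIntegrable_beta_kernel ha hb).div_const _

end BetaCdf

lemma integral_rpow_mul_one_sub_rpow_mul_betaPdf (a₁ b₁ a₂ b₂ : ℝ) :
    ∫ x in (0 : ℝ)..1, x ^ a₁ * (1 - x) ^ b₁ * betaPdf a₂ b₂ x
      = betaFn (a₁ + a₂) (b₁ + b₂) / betaFn a₂ b₂ := by
  simp only [betaPdf, mul_div_assoc', intervalIntegral.integral_div, betaFn]
  congr 1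
  refine integral_congr_Ioo_of_le zero_le_one fun x hx => ?_
  rw [add_sub_assoc a₁, add_sub_assoc b₁, rpow_add hx.1, rpow_add (sub_pos.mpr hx.2)]
  ring

/-- Recurrence: incrementing β₁ by one. -/
theorem probG_beta1_succ (a₁ b₁ a₂ b₂ : ℝ)
    (hα₁ : 0 < a₁) (hβ₁ : 0 < b₁) (hα₂ : 0 < a₂) (hβ₂ : 0 < b₂) :
    probG a₁ (b₁ + 1) a₂ b₂ = probG a₁ b₁ a₂ b₂ - probH a₁ b₁ a₂ b₂ / b₁ := by
  have hmoment := mul_betaMoment_eq hα₁ hβ₁ (continuousOn_betaCdf hα₂ hβ₂)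
    (fun _ hx => hasDerivAt_betaCdf hα₂ hβ₂ hx) (intervalIntegrable_betaPdf hα₂ hβ₂)
  rw [integral_rpow_mul_one_sub_rpow_mul_betaPdf] at hmoment
  have hbeta := mul_betaFn_eq hα₁ hβ₁
  have hB₁ := (betaFn_pos hα₁ hβ₁).ne'
  have hB₁' := (betaFn_pos hα₁ (by linarith : 0 < b₁ + 1)).ne'
  have hB₂ := (betaFn_pos hα₂ hβ₂).ne'
  rw [probG_eq_betaMoment_div, probG_eq_betaMoment_div, probH]
  field_simp at hmoment ⊢
  linear_combination betaMoment a₁ (b₁ + 1) (betaCdf a₂ b₂) * betaFn a₂ b₂ * hbeta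
    - betaFn a₁ (b₁ + 1) * hmoment
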